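/- arXiv:2310.18715 — 2 statements merged into one kernel-verified Lean document; each statement's English description precedes it below -/
import Mathlib

section
/- Let Z_1, …, Z_K be independent real random variables, let μ ∈ ℝ, J > 0, and 0 < q' < q < 1, and suppose P(Z_k ≤ μ − J) ≤ q' for every k ∈ {1, …, K}. Let 𝒬_q(Z_1, …, Z_K) denote the ⌈qK⌉-th smallest value among Z_1, …, Z_K. Then P( 𝒬_q(Z_1, …, Z_K) ≤ μ − J ) ≤ exp(−2K(q − q')²). -/
/-! If the `⌈qK⌉`-th smallest of the `Z k` is at most `m - J`, then at least `qK` of the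
indicators `1{Z k ≤ m - J}` equal one. These indicators are independent, take values in `[0, 1]` and have means
at most `q'`, so by Hoeffding's inequality their sum exceeds its mean by `K(q - q')` with
probability at most `exp(-2K(q - q')²)`. -/

open MeasureTheory ProbabilityTheory Real

/-- The `j`-th smallest value (1-indexed) among `z 0, …, z (K-1)`. -/
noncomputable def orderStat {K : ℕ} (z : Fin K → ℝ) (j : ℕ) : ℝ :=
  ((List.ofFn z).insertionSort (· ≤ ·)).getD (j - 1) 0

/-- The `q`-th lower empirical quantile: the `⌈qK⌉`-th smallest value. -/
noncomputable def lowerQuantile {K : ℕ} (q : ℝ) (z : Fin K → ℝ) : ℝ :=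
  orderStat z ⌈q * (K : ℝ)⌉₊

open Finset

theorem List.SortedLE.succ_le_countP_le {α : Type*} [Preorder α] [DecidableLE α] {l : List α}
    (hl : l.SortedLE) {i : ℕ} (hi : i < l.length) {c : α} (h : l[i] ≤ c) :
    i + 1 ≤ l.countP (· ≤ c) := by
  have htake : ∀ x ∈ l.take (i + 1), x ≤ c := by
    intro x hx
    obtain ⟨k, hk, rfl⟩ := List.getElem_of_mem hx
    rw [List.getElem_take]
    exact (hl.getElem_le_getElem_of_le (by simp at hk; omega)).trans h
  calc i + 1 = (l.take (i + 1)).length := by simp; omega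
    _ = (l.take (i + 1)).countP (· ≤ c) := (List.countP_eq_length.2 (by simpa using htake)).symm
    _ ≤ l.countP (· ≤ c) := (List.take_sublist _ _).countP_le

theorem List.countP_ofFn {α : Type*} {K : ℕ} (z : Fin K → α) (p : α → Prop) [DecidablePred p] :
    (List.ofFn z).countP (p ·) = #{k | p (z k)} := by
  rw [List.ofFn_eq_map, List.countP_map, Fin.univ_def, Finset.card_def, Finset.filter_val]
  simp [List.countP_eq_length_filter, Function.comp_def]

theorem le_card_filter_of_orderStat_le {K : ℕ} (z : Fin K → ℝ) {j : ℕ} {c : ℝ} (hjK : j ≤ K)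
    (h : orderStat z j ≤ c) : j ≤ #{k | z k ≤ c} := by
  obtain rfl | hj := Nat.eq_zero_or_pos j
  · exact Nat.zero_le _
  set l := (List.ofFn z).insertionSort (· ≤ ·)
  have hi : j - 1 < l.length := by simp [l]; omega
  rw [orderStat, List.getD_eq_getElem _ _ hi] at h
  calc j = j - 1 + 1 := by omega
    _ ≤ l.countP (· ≤ c) := List.sortedLE_insertionSort.succ_le_countP_le hi h
    _ = (List.ofFn z).countP (· ≤ c) := (List.perm_insertionSort _ _).countP_eq _
    _ = #{k | z k ≤ c} := List.countP_ofFn z (· ≤ c)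

theorem measureReal_card_filter_mem_ge_le {Ω β ι : Type*} [MeasurableSpace Ω]
    [MeasurableSpace β] [Fintype ι] {μ : Measure Ω} [IsProbabilityMeasure μ]
    {Z : ι → Ω → β} (hmeas : ∀ k, Measurable (Z k)) (hindep : iIndepFun Z μ)
    {S : Set β} [DecidablePred (· ∈ S)] (hS : MeasurableSet S) {p t : ℝ}
    (hp : ∀ k, μ.real (Z k ⁻¹' S) ≤ p) (ht : 0 ≤ t) :
    μ.real {ω | Fintype.card ι * (p + t) ≤ #{k | Z k ω ∈ S}}
      ≤ exp (-2 * Fintype.card ι * t ^ 2) := by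
  set n := Fintype.card ι with hn_def
  set φ : β → ℝ := S.indicator 1
  have hφ : Measurable φ := measurable_one.indicator hS
  set X : ι → Ω → ℝ := fun k ω => φ (Z k ω) - μ.real (Z k ⁻¹' S)
  have hX_subG : ∀ k ∈ (univ : Finset ι), HasSubgaussianMGF (X k) (4 : NNReal)⁻¹ μ := by
    intro k _
    have hmean : μ[φ ∘ Z k] = μ.real (Z k ⁻¹' S) := by
      simp [φ, ← Set.indicator_comp_right, integral_indicator_one (hmeas k hS)]
    have hoeffding := hasSubgaussianMGF_of_mem_Icc (μ := μ) (a := 0) (b := 1)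
      (hφ.comp (hmeas k)).aemeasurable
      (ae_of_all _ fun ω => by by_cases h : Z k ω ∈ S <;> simp [φ, h])
    have hparam : (‖(1 : ℝ) - 0‖₊ / 2) ^ 2 = (4 : NNReal)⁻¹ := by ext; norm_num
    rwa [hmean, hparam] at hoeffding
  have hX_indep : iIndepFun X μ :=
    hindep.comp (fun k x => φ x - μ.real (Z k ⁻¹' S)) (fun k => hφ.sub_const _)
  have hsub : {ω | n * (p + t) ≤ #{k | Z k ω ∈ S}} ⊆ {ω | n * t ≤ ∑ k, X k ω} := by
    intro ω hω
    have hcount : ∑ k, φ (Z k ω) = #{k | Z k ω ∈ S} := by simp [φ, Set.indicator_apply]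
    have hsum_p : ∑ k, μ.real (Z k ⁻¹' S) ≤ n * p := by
      simpa using Finset.sum_le_sum fun k (_ : k ∈ univ) => hp k
    simp only [Set.mem_ofPred_eq, X, Finset.sum_sub_distrib, hcount] at hω ⊢
    linarith
  calc _ ≤ μ.real {ω | n * t ≤ ∑ k, X k ω} := measureReal_mono hsub
    _ ≤ exp (-(n * t) ^ 2 / (2 * ((∑ _k : ι, (4 : NNReal)⁻¹ : NNReal) : ℝ))) :=
      HasSubgaussianMGF.measure_sum_ge_le_of_iIndepFun hX_indep hX_subG (by positivity)
    _ = exp (-2 * n * t ^ 2) := by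
      rcases eq_or_ne n 0 with hn | hn
      · simp [hn]
      · simp only [sum_const, card_univ, nsmul_eq_mul, NNReal.coe_mul, NNReal.coe_natCast,
          NNReal.coe_inv, NNReal.coe_ofNat, ← hn_def]
        field_simp
        ring_nf

theorem quantile_lower_bound_general
    {Ω : Type*} [MeasurableSpace Ω] (μ : Measure Ω) [IsProbabilityMeasure μ]
    (K : ℕ) (Z : Fin K → Ω → ℝ)
    (hmeas : ∀ k, Measurable (Z k))
    (hindep : iIndepFun Z μ)
    (m J q q' : ℝ) (hq'0 : 0 < q') (hq'q : q' < q) (hq1 : q < 1)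
    (hbound : ∀ k, μ {ω | Z k ω ≤ m - J} ≤ ENNReal.ofReal q') :
    μ {ω | lowerQuantile q (fun k => Z k ω) ≤ m - J}
      ≤ ENNReal.ofReal (Real.exp (-2 * K * (q - q') ^ 2)) := by
  classical
  have hrank : ⌈q * K⌉₊ ≤ K := Nat.ceil_le.2 (mul_le_of_le_one_left K.cast_nonneg hq1.le)
  have hsub : {ω | lowerQuantile q (fun k => Z k ω) ≤ m - J}
      ⊆ {ω | K * q ≤ #{k | Z k ω ∈ Set.Iic (m - J)}} := by
    intro ω hω
    have hcount := le_card_filter_of_orderStat_le (fun k => Z k ω) hrank hω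
    simp only [Set.mem_ofPred_eq, Set.mem_Iic, mul_comm (K : ℝ)]
    exact (Nat.le_ceil _).trans (by exact_mod_cast hcount)
  have hp : ∀ k, μ.real (Z k ⁻¹' Set.Iic (m - J)) ≤ q' := fun k =>
    ENNReal.toReal_le_of_le_ofReal hq'0.le (hbound k)
  have hhoeffding := measureReal_card_filter_mem_ge_le hmeas hindep measurableSet_Iic hp
    (sub_nonneg.2 hq'q.le)
  rw [add_sub_cancel, Fintype.card_fin] at hhoeffding
  calc _ ≤ μ {ω | K * q ≤ #{k | Z k ω ∈ Set.Iic (m - J)}} := measure_mono hsub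
    _ = ENNReal.ofReal (μ.real _) := (ofReal_measureReal (measure_ne_top _ _)).symm
    _ ≤ _ := ENNReal.ofReal_le_ofReal hhoeffding

/-- Lemma A2: if each of `K` independent random variables undershoots `m - J` with
probability at most `q' < q`, then their empirical `q`-quantile undershoots `m - J` with
probability at most `exp(−2K(q − q')²)`. -/
theorem quantile_lower_bound
    {Ω : Type*} [MeasurableSpace Ω] (μ : Measure Ω) [IsProbabilityMeasure μ]
    (K : ℕ) (hK : 0 < K) (Z : Fin K → Ω → ℝ)
    (hmeas : ∀ k, Measurable (Z k))
    (hindep : iIndepFun Z μ)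
    (m J q q' : ℝ) (hJ : 0 < J) (hq'0 : 0 < q') (hq'q : q' < q) (hq1 : q < 1)
    (hbound : ∀ k, μ {ω | Z k ω ≤ m - J} ≤ ENNReal.ofReal q') :
    μ {ω | lowerQuantile q (fun k => Z k ω) ≤ m - J}
      ≤ ENNReal.ofReal (Real.exp (-2 * K * (q - q') ^ 2)) :=
  quantile_lower_bound_general μ K Z hmeas hindep m J q q' hq'0 hq'q hq1 hbound
end

section
/- Let Ĵ_1, …, Ĵ_K be independent real random variables and J ∈ ℝ such that P(Ĵ_k ≤ J) ≥ 1/2 for every k ∈ {1, …, K}. Then for every q ∈ (0, 1/2), P( 𝒬_q(Ĵ_1, …, Ĵ_K) ≤ J ) ≥ 1 − exp(−2K(1/2 − q)²), where 𝒬_q(Ĵ_1, …, Ĵ_K) denotes the ⌈qK⌉-th smallest value among Ĵ_1, …, Ĵ_K. -/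
open MeasureTheory ProbabilityTheory Real

/-!
The `⌈qK⌉`-th smallest estimate is at most `J` as soon as at least `qK` of the estimates are at
most `J`. The indicators of the events `Ĵ_k ≤ J` are independent, `[0, 1]`-valued and have means
at least `1/2`, so by Hoeffding's inequality their sum falls below `qK = K/2 - K(1/2 - q)` with
probability at most `exp (-2K(1/2 - q)²)`.
-/

open Finset

theorem List.Pairwise.getD_le_of_lt_countP {α : Type*} [LinearOrder α] {l : List α}
    (hl : l.Pairwise (· ≤ ·)) {x : α} {i : ℕ} (hi : i < l.countP (· ≤ x)) (d : α) :
    l.getD i d ≤ x := by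
  induction l generalizing i with
  | nil => simp at hi
  | cons a l ih =>
    rw [List.pairwise_cons] at hl
    by_cases ha : a ≤ x
    · cases i with
      | zero => simpa
      | succ i =>
        rw [List.countP_cons_of_pos (by simpa)] at hi
        exact ih hl.2 (by omega)
    · rw [List.countP_eq_zero.mpr fun b hb ↦ ?_] at hi
      · omega
      rcases List.mem_cons.1 hb with rfl | hb
      · simpa using ha
      · simpa using (lt_of_not_ge ha).trans_le (hl.1 b hb)

theorem orderStat_le_of_le_card {K : ℕ} (z : Fin K → ℝ) {j : ℕ} (hj : 0 < j) {J : ℝ}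
    (h : j ≤ #{k | z k ≤ J}) : orderStat z j ≤ J := by
  refine (List.pairwise_insertionSort _ _).getD_le_of_lt_countP ?_ 0
  rw [(List.perm_insertionSort _ _).countP_eq, List.countP_ofFn]
  omega

theorem lowerQuantile_le_of_mul_le_card {K : ℕ} (hK : 0 < K) {q : ℝ} (hq : 0 < q)
    (z : Fin K → ℝ) {J : ℝ} (h : q * K ≤ #{k | z k ≤ J}) : lowerQuantile q z ≤ J :=
  orderStat_le_of_le_card z (Nat.ceil_pos.2 (by positivity)) (Nat.ceil_le.2 h)

section Hoeffding

variable {Ω ι : Type*} [MeasurableSpace Ω] {μ : Measure Ω} [IsProbabilityMeasure μ]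
  [Fintype ι]

theorem measureReal_sum_le_sum_integral_sub_le_exp {X : ι → Ω → ℝ} (hindep : iIndepFun X μ)
    (hmeas : ∀ i, AEMeasurable (X i) μ) (hX : ∀ i, ∀ᵐ ω ∂μ, X i ω ∈ Set.Icc 0 1)
    {t : ℝ} (ht : 0 ≤ t) :
    μ.real {ω | ∑ i, X i ω ≤ ∑ i, μ[X i] - Fintype.card ι * t} ≤
      exp (-2 * Fintype.card ι * t ^ 2) := by
  have hsubG i :
      HasSubgaussianMGF (fun ω ↦ μ[X i] - X i ω) ((‖(1 : ℝ) - 0‖₊ / 2) ^ 2) μ := by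
    simpa [Pi.neg_def] using (hasSubgaussianMGF_of_mem_Icc (hmeas i) (hX i)).neg
  have hindep' : iIndepFun (fun i ω ↦ μ[X i] - X i ω) μ :=
    hindep.comp (fun i (y : ℝ) ↦ ∫ ω, X i ω ∂μ - y) fun i ↦ by fun_prop
  convert HasSubgaussianMGF.measure_sum_ge_le_of_iIndepFun hindep' (s := univ)
    (fun i _ ↦ hsubG i) (mul_nonneg (Fintype.card ι).cast_nonneg ht) using 2
  · ext ω
    simp only [Set.mem_ofPred_eq, sum_sub_distrib]
    exact le_sub_comm
  · simp only [sub_zero, nnnorm_one, sum_const, card_univ, nsmul_eq_mul, NNReal.coe_mul,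
      NNReal.coe_natCast, NNReal.coe_div, NNReal.coe_pow, NNReal.coe_one, NNReal.coe_ofNat]
    obtain hn | hn := eq_or_ne (Fintype.card ι : ℝ) 0
    · simp [hn]
    · field_simp

theorem one_sub_exp_le_measureReal_mul_le_card {Y : ι → Ω → ℝ}
    (hmeas : ∀ i, Measurable (Y i)) (hindep : iIndepFun Y μ) {J p q : ℝ}
    (hp : ∀ i, p ≤ μ.real {ω | Y i ω ≤ J}) (hq : q ≤ p) :
    1 - exp (-2 * Fintype.card ι * (p - q) ^ 2) ≤
      μ.real {ω | q * Fintype.card ι ≤ #{i | Y i ω ≤ J}} := by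
  set n := Fintype.card ι
  set X : ι → Ω → ℝ := fun i ↦ {ω | Y i ω ≤ J}.indicator 1
  have hXmeas i : Measurable (X i) :=
    measurable_const.indicator (measurableSet_le (hmeas i) measurable_const)
  have hXindep : iIndepFun X μ :=
    hindep.comp (fun _ ↦ (Set.Iic J).indicator 1) fun _ ↦
      measurable_const.indicator measurableSet_Iic
  have hX01 i : ∀ᵐ ω ∂μ, X i ω ∈ Set.Icc 0 1 := ae_of_all _ fun ω ↦ by
    by_cases h : Y i ω ≤ J <;> simp [X, h]
  have hcount ω : ∑ i, X i ω = #{i | Y i ω ≤ J} := by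
    simp only [X, Set.indicator_apply, Set.mem_ofPred_eq, Pi.one_apply, sum_boole]
  have hmean : n * p ≤ ∑ i, μ[X i] := by
    have := card_nsmul_le_sum univ (fun i ↦ μ[X i]) p fun i _ ↦ by
      rw [integral_indicator_one (measurableSet_le (hmeas i) measurable_const)]
      exact hp i
    simpa only [card_univ, nsmul_eq_mul] using this
  have hG : MeasurableSet {ω | q * n ≤ ∑ i, X i ω} :=
    measurableSet_le measurable_const (Finset.measurable_sum _ fun i _ ↦ hXmeas i)
  have hGc :
      {ω | q * n ≤ ∑ i, X i ω}ᶜ ⊆ {ω | ∑ i, X i ω ≤ ∑ i, μ[X i] - n * (p - q)} := by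
    intro ω hω
    simp only [Set.mem_compl_iff, Set.mem_ofPred_eq, not_le] at hω ⊢
    linarith
  have hhoeffding := (measureReal_mono hGc).trans <|
    measureReal_sum_le_sum_integral_sub_le_exp hXindep (fun i ↦ (hXmeas i).aemeasurable) hX01
      (sub_nonneg.2 hq)
  rw [probReal_compl_eq_one_sub hG] at hhoeffding
  simp only [hcount] at hhoeffding
  linarith

end Hoeffding

/-- Uncertainty quantification for ROAM: if each of `K` independent value estimates is
median-unbiased for `J` (falls at or below `J` with probability at least `1/2`), then for
every `q ∈ (0, 1/2)` the empirical `q`-quantile of the estimates lies at or below `J`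
with probability at least `1 − exp(−2K(1/2 − q)²)`. -/
theorem quantile_lower_confidence_bound
    {Ω : Type*} [MeasurableSpace Ω] (μ : Measure Ω) [IsProbabilityMeasure μ]
    (K : ℕ) (hK : 0 < K) (Jhat : Fin K → Ω → ℝ)
    (hmeas : ∀ k, Measurable (Jhat k))
    (hindep : iIndepFun Jhat μ)
    (J : ℝ)
    (hmedian : ∀ k, ENNReal.ofReal (1 / 2) ≤ μ {ω | Jhat k ω ≤ J}) :
    ∀ q : ℝ, q ∈ Set.Ioo (0 : ℝ) (1 / 2) →
      ENNReal.ofReal (1 - Real.exp (-2 * K * (1 / 2 - q) ^ 2)) ≤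
        μ {ω | lowerQuantile q (fun k => Jhat k ω) ≤ J} := by
  rintro q ⟨hq0, hq⟩
  have hmedian' k : 1 / 2 ≤ μ.real {ω | Jhat k ω ≤ J} :=
    (ENNReal.ofReal_le_iff_le_toReal (measure_ne_top _ _)).1 (hmedian k)
  calc ENNReal.ofReal (1 - exp (-2 * K * (1 / 2 - q) ^ 2))
      ≤ ENNReal.ofReal (μ.real {ω | q * K ≤ #{k | Jhat k ω ≤ J}}) := by
        gcongr
        simpa only [Fintype.card_fin] using
          one_sub_exp_le_measureReal_mul_le_card hmeas hindep hmedian' hq.le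
    _ = μ {ω | q * K ≤ #{k | Jhat k ω ≤ J}} := ofReal_measureReal
    _ ≤ _ := measure_mono fun ω ↦ lowerQuantile_le_of_mul_le_card hK hq0 _
end
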